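/- arXiv:0905.3140 — 6 statements merged into one kernel-verified Lean document; each statement's English description precedes it below -/
import Mathlib

section
/- Let d ≥ 1 be an integer, let u > 0 be a real number, let φ : ℝ^d → ℂ be a Schwartz function, and let y ∈ ℝ^d. Then the functions x ↦ φ(y + 2x/|x|²)·(|x|²/2)^{-d(1+u)/2} and x ↦ φ(y + x)·(|x|²/2)^{-d(1-u)/2} are both Lebesgue integrable on ℝ^d, and ∫_{ℝ^d} φ(y + 2x/|x|²)·(|x|²/2)^{-d(1+u)/2} dx = ∫_{ℝ^d} φ(y + x)·(|x|²/2)^{-d(1-u)/2} dx. -/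
/-!
The map `x ↦ (2 / ‖x‖²) • x` is the inversion in the sphere of radius `√2` about the origin: an
involution of `ℝ^d ∖ {0}` whose Jacobian has absolute value `(2 / ‖x‖²)^d`. For the image point
`x'` one has `‖x'‖² / 2 = 2 / ‖x‖²`, and since the exponents `d(1+u)/2` and `d(1-u)/2` add up to
`d`, the left kernel is exactly the Jacobian times the right kernel at `x'`; the change of variables
formula then gives both the integrability transfer and the identity. The right-hand side is
integrable because its singularity `‖x‖^(-d(1-u))` at the origin has exponent `> -d`, while the
Schwartz decay of `φ` dominates the possible polynomial growth of the kernel at infinity.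
-/

open MeasureTheory Measure Set Metric EuclideanGeometry Module

theorem half_sq_rpow_neg {r : ℝ} (hr : 0 ≤ r) (e : ℝ) :
    (r ^ 2 / 2) ^ (-e) = 2 ^ e * r ^ (-(2 * e)) := by
  rw [Real.div_rpow (by positivity) zero_le_two, Real.rpow_neg zero_le_two, div_inv_eq_mul,
    ← Real.rpow_natCast, ← Real.rpow_mul hr, mul_comm]
  push_cast
  ring_nf

/-- At `x = 0` both sides vanish, through the conventions `0 ^ (-a) = 0` and `2 / 0 = 0`. -/
theorem half_sq_rpow_neg_eq_inversion {E : Type*} [NormedAddCommGroup E] [NormedSpace ℝ E]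
    {n : ℕ} (hn : n ≠ 0) {a b : ℝ} (hab : a + b = n) (ha : a ≠ 0) (x : E) :
    (‖x‖ ^ 2 / 2) ^ (-a) = (2 / ‖x‖ ^ 2) ^ n * (‖(2 / ‖x‖ ^ 2) • x‖ ^ 2 / 2) ^ (-b) := by
  rcases eq_or_ne x 0 with rfl | hx
  · simp [Real.zero_rpow (neg_ne_zero.2 ha), hn]
  have ht : 0 < 2 / ‖x‖ ^ 2 := by positivity
  have hnorm : ‖(2 / ‖x‖ ^ 2) • x‖ ^ 2 / 2 = 2 / ‖x‖ ^ 2 := by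
    rw [norm_smul, Real.norm_of_nonneg ht.le]
    field_simp
  rw [hnorm, ← Real.rpow_natCast (2 / ‖x‖ ^ 2) n, ← Real.rpow_add ht, ← inv_div,
    Real.inv_rpow (by positivity), ← Real.rpow_neg (by positivity), neg_neg, ← hab]
  ring_nf

theorem SchwartzMap.integrable_norm_rpow_smul {E F : Type*} [NormedAddCommGroup E]
    [NormedSpace ℝ E] [FiniteDimensional ℝ E] [MeasurableSpace E] [BorelSpace E]
    (μ : Measure E) [μ.IsAddHaarMeasure] [NormedAddCommGroup F] [NormedSpace ℝ F]
    (hE : 1 ≤ finrank ℝ E) (ψ : SchwartzMap E F) {α : ℝ} (hα : α < finrank ℝ E) :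
    Integrable (fun x => ‖x‖ ^ (-α) • ψ x) μ := by
  have hmeas : AEStronglyMeasurable (fun x => ‖x‖ ^ (-α) • ψ x) μ :=
    (by fun_prop : Measurable fun x : E => ‖x‖ ^ (-α)).aestronglyMeasurable.smul
      ψ.continuous.aestronglyMeasurable
  rw [← integrableOn_univ, ← union_compl_self (ball (0 : E) 1)]
  refine .union (integrableOn_ball_of_norm_le_rpow hE hα (C := SchwartzMap.seminorm ℝ 0 0 ψ)
    (.of_forall fun x => ?_) hmeas) ?_
  · rw [norm_smul, Real.norm_of_nonneg (by positivity), mul_comm]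
    exact mul_le_mul_of_nonneg_right (ψ.norm_le_seminorm ℝ x) (by positivity)
  · refine (ψ.integrable_pow_mul μ ⌈-α⌉₊).integrableOn.mono' hmeas.restrict ?_
    filter_upwards [ae_restrict_mem measurableSet_ball.compl] with x hx
    have hx1 : 1 ≤ ‖x‖ := by simpa using hx
    rw [norm_smul, Real.norm_of_nonneg (by positivity), ← Real.rpow_natCast]
    exact mul_le_mul_of_nonneg_right
      (Real.rpow_le_rpow_of_exponent_le hx1 (Nat.le_ceil _)) (norm_nonneg _)

section Inversion

variable {E : Type*} [NormedAddCommGroup E] [InnerProductSpace ℝ E]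

theorem inversion_zero_sqrt {c : ℝ} (hc : 0 ≤ c) (x : E) :
    inversion 0 (√c) x = (c / ‖x‖ ^ 2) • x := by
  simp [inversion_def, div_pow, Real.sq_sqrt hc]

theorem image_inversion_compl_zero {R : ℝ} (hR : R ≠ 0) :
    inversion (0 : E) R '' {0}ᶜ = {0}ᶜ := by
  rw [image_compl_eq (inversion_bijective 0 hR), image_singleton, inversion_self]

theorem hasFDerivWithinAt_inversion_compl_zero (R : ℝ) :
    ∀ x ∈ ({0}ᶜ : Set E), HasFDerivWithinAt (inversion 0 R)
      ((R / dist x 0) ^ 2 • ((ℝ ∙ (x - 0))ᗮ.reflection : E →L[ℝ] E)) {0}ᶜ x :=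
  fun _ hx => (hasFDerivAt_inversion hx).hasFDerivWithinAt

variable [FiniteDimensional ℝ E] {F : Type*} [NormedAddCommGroup F] [NormedSpace ℝ F] {c : ℝ}

theorem abs_det_fderiv_inversion {x : E} (hx : x ≠ 0) (R : ℝ) :
    |((R / dist x 0) ^ 2 • ((ℝ ∙ (x - 0))ᗮ.reflection : E →L[ℝ] E)).det|
      = ((R / ‖x‖) ^ 2) ^ finrank ℝ E := by
  have hrefl : ((ℝ ∙ (x - 0))ᗮ.reflection : E →L[ℝ] E).det = -1 := by
    change LinearMap.det (ℝ ∙ (x - 0))ᗮ.reflection.toLinearMap = -1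
    rw [Submodule.det_reflection, Submodule.orthogonal_orthogonal, sub_zero,
      finrank_span_singleton hx, pow_one]
  rw [ContinuousLinearMap.det, ContinuousLinearMap.toLinearMap_smul, LinearMap.det_smul,
    ← ContinuousLinearMap.det, hrefl, mul_neg_one, abs_neg, dist_zero_right,
    abs_of_nonneg (by positivity)]

theorem eqOn_abs_det_fderiv_inversion_smul (hc : 0 ≤ c) (g : E → F) :
    EqOn (fun x => |((√c / dist x 0) ^ 2 • ((ℝ ∙ (x - 0))ᗮ.reflection : E →L[ℝ] E)).det|
        • g (inversion 0 (√c) x))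
      (fun x => ((c / ‖x‖ ^ 2) ^ finrank ℝ E) • g ((c / ‖x‖ ^ 2) • x)) {0}ᶜ := by
  intro x hx
  dsimp only
  rw [abs_det_fderiv_inversion hx, inversion_zero_sqrt hc, div_pow, Real.sq_sqrt hc]

variable [MeasurableSpace E] [BorelSpace E] [Nontrivial E] (μ : Measure E) [μ.IsAddHaarMeasure]

theorem integrable_inversion_smul_iff (hc : 0 < c) (g : E → F) :
    Integrable (fun x => ((c / ‖x‖ ^ 2) ^ finrank ℝ E) • g ((c / ‖x‖ ^ 2) • x)) μ ↔
      Integrable g μ := by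
  have hR : √c ≠ 0 := (Real.sqrt_pos.2 hc).ne'
  have hs : MeasurableSet ({0}ᶜ : Set E) := (measurableSet_singleton 0).compl
  calc Integrable _ μ ↔ IntegrableOn _ {0}ᶜ μ := by rw [IntegrableOn, restrict_compl_singleton]
    _ ↔ IntegrableOn _ {0}ᶜ μ :=
        integrableOn_congr_fun (eqOn_abs_det_fderiv_inversion_smul hc.le g).symm hs
    _ ↔ IntegrableOn g (inversion 0 (√c) '' {0}ᶜ) μ :=
        (integrableOn_image_iff_integrableOn_abs_det_fderiv_smul μ hs
          (hasFDerivWithinAt_inversion_compl_zero _) (inversion_injective 0 hR).injOn g).symm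
    _ ↔ IntegrableOn g {0}ᶜ μ := by rw [image_inversion_compl_zero hR]
    _ ↔ Integrable g μ := by rw [IntegrableOn, restrict_compl_singleton]

theorem integral_inversion_smul (hc : 0 < c) (g : E → F) :
    ∫ x, ((c / ‖x‖ ^ 2) ^ finrank ℝ E) • g ((c / ‖x‖ ^ 2) • x) ∂μ = ∫ x, g x ∂μ := by
  have hR : √c ≠ 0 := (Real.sqrt_pos.2 hc).ne'
  have hs : MeasurableSet ({0}ᶜ : Set E) := (measurableSet_singleton 0).compl
  calc ∫ x, _ ∂μ = ∫ x in {0}ᶜ, _ ∂μ := by rw [restrict_compl_singleton]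
    _ = ∫ x in {0}ᶜ, _ ∂μ :=
        setIntegral_congr_fun hs (eqOn_abs_det_fderiv_inversion_smul hc.le g).symm
    _ = ∫ x in inversion 0 (√c) '' {0}ᶜ, g x ∂μ :=
        (integral_image_eq_integral_abs_det_fderiv_smul μ hs
          (hasFDerivWithinAt_inversion_compl_zero _) (inversion_injective 0 hR).injOn g).symm
    _ = ∫ x in {0}ᶜ, g x ∂μ := by rw [image_inversion_compl_zero hR]
    _ = ∫ x, g x ∂μ := by rw [restrict_compl_singleton]

end Inversion

/-- Lemma 3.3 of the paper (with `d = n-1`): the intertwining integral identity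
for the spherical principal series of `SO(n,1)`. -/
theorem intertwining_integral_identity (d : ℕ) (hd : 1 ≤ d) (u : ℝ) (hu : 0 < u)
    (φ : SchwartzMap (EuclideanSpace ℝ (Fin d)) ℂ)
    (y : EuclideanSpace ℝ (Fin d)) :
    Integrable (fun x : EuclideanSpace ℝ (Fin d) =>
        φ (y + (2 / ‖x‖ ^ 2) • x) * ((((‖x‖ ^ 2 / 2) ^ (-((d : ℝ) * (1 + u) / 2))) : ℝ) : ℂ)) ∧
    Integrable (fun x : EuclideanSpace ℝ (Fin d) =>
        φ (y + x) * ((((‖x‖ ^ 2 / 2) ^ (-((d : ℝ) * (1 - u) / 2))) : ℝ) : ℂ)) ∧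
    ∫ x : EuclideanSpace ℝ (Fin d),
        φ (y + (2 / ‖x‖ ^ 2) • x) * ((((‖x‖ ^ 2 / 2) ^ (-((d : ℝ) * (1 + u) / 2))) : ℝ) : ℂ)
      = ∫ x : EuclideanSpace ℝ (Fin d),
          φ (y + x) * ((((‖x‖ ^ 2 / 2) ^ (-((d : ℝ) * (1 - u) / 2))) : ℝ) : ℂ) := by
  have hdim : finrank ℝ (EuclideanSpace ℝ (Fin d)) = d := finrank_euclideanSpace_fin
  have : Nontrivial (EuclideanSpace ℝ (Fin d)) :=
    nontrivial_of_finrank_pos (R := ℝ) (by omega)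
  set g := fun x : EuclideanSpace ℝ (Fin d) =>
    φ (y + x) * ((((‖x‖ ^ 2 / 2) ^ (-((d : ℝ) * (1 - u) / 2))) : ℝ) : ℂ)
  have hg : Integrable g := by
    have hα : 2 * ((d : ℝ) * (1 - u) / 2) < finrank ℝ (EuclideanSpace ℝ (Fin d)) := by
      rw [hdim]
      nlinarith [(by exact_mod_cast hd : (1 : ℝ) ≤ d)]
    refine (((φ.compSubConstCLM ℝ (-y)).integrable_norm_rpow_smul volume (by omega) hα).const_mul
      (2 ^ ((d : ℝ) * (1 - u) / 2) : ℝ)).congr (.of_forall fun x => ?_)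
    simp only [g, SchwartzMap.compSubConstCLM_apply, sub_neg_eq_add, add_comm x y,
      half_sq_rpow_neg (norm_nonneg x), Complex.ofReal_mul, Complex.real_smul]
    ring
  have hkernel : (fun x : EuclideanSpace ℝ (Fin d) =>
      φ (y + (2 / ‖x‖ ^ 2) • x) * ((((‖x‖ ^ 2 / 2) ^ (-((d : ℝ) * (1 + u) / 2))) : ℝ) : ℂ))
      = fun x => (2 / ‖x‖ ^ 2) ^ finrank ℝ (EuclideanSpace ℝ (Fin d)) • g ((2 / ‖x‖ ^ 2) • x) := by
    funext x
    rw [hdim, half_sq_rpow_neg_eq_inversion (n := d) (b := (d : ℝ) * (1 - u) / 2) (by omega)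
      (by ring) (by positivity) x, Complex.ofReal_mul, Complex.real_smul]
    push_cast
    ring
  rw [hkernel]
  exact ⟨(integrable_inversion_smul_iff volume two_pos g).2 hg, hg,
    integral_inversion_smul volume two_pos g⟩
end

section
/- Let n ≥ 3 be an integer, let 1/(n−1) < u < 1 be real, and set u' = ((n−1)u − 1)/(n−2). Then C_u := ∫_ℝ (1+t²)^{-(n-1)u/2} dt is finite, and for every measurable function φ : ℝ^{n-2} → ℂ one has the identity in [0, ∞]: ∫_{ℝ^{n-2} × ℝ} |φ(y)|² (|y|² + t²)^{-(n-1)u/2} dy dt = C_u · ∫_{ℝ^{n-2}} |φ(y)|² |y|^{-(n-2)u'} dy. -/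
open MeasureTheory
open scoped ENNReal NNReal

/-! By Tonelli, integrate first in `t`. For `y ≠ 0` the substitution `t = ‖y‖ τ` gives
`∫ (‖y‖² + t²)^(-s) dt = ‖y‖^(1 - 2s) ∫ (1 + τ²)^(-s) dτ`, and with `s = (n-1)u/2` the exponent
`1 - 2s` is exactly `-(n-2)u'`. Finiteness of `C_u` is the integrability of the Japanese bracket
`(1 + t²)^(-s)` on `ℝ` for `2s > 1`, i.e. `(n-1)u > 1`. -/

theorem lintegral_comp_mul_left_real (g : ℝ → ℝ≥0∞) {a : ℝ} (ha : a ≠ 0) :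
    ∫⁻ t, g (a * t) = ENNReal.ofReal |a⁻¹| * ∫⁻ t, g t := by
  rw [← smul_eq_mul, ← lintegral_smul_measure, ← Real.map_volume_mul_left ha]
  exact ((Homeomorph.mulLeft₀ a ha).measurableEmbedding.lintegral_map g).symm

theorem lintegral_sq_add_sq_rpow_neg (s : ℝ) {c : ℝ} (hc : 0 < c) :
    ∫⁻ t : ℝ, ENNReal.ofReal ((c ^ 2 + t ^ 2) ^ (-s))
      = ENNReal.ofReal (c ^ (1 - 2 * s)) * ∫⁻ t : ℝ, ENNReal.ofReal ((1 + t ^ 2) ^ (-s)) := by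
  have hfactor : ∀ t : ℝ,
      (c ^ 2 + t ^ 2) ^ (-s) = c ^ (-2 * s) * (1 + (c⁻¹ * t) ^ 2) ^ (-s) := by
    intro t
    rw [show -2 * s = 2 * -s by ring, Real.rpow_mul hc.le, Real.rpow_two,
      ← Real.mul_rpow (by positivity) (by positivity)]
    congr 1
    field_simp
  calc ∫⁻ t : ℝ, ENNReal.ofReal ((c ^ 2 + t ^ 2) ^ (-s))
      = ENNReal.ofReal (c ^ (-2 * s)) *
          ∫⁻ t : ℝ, ENNReal.ofReal ((1 + (c⁻¹ * t) ^ 2) ^ (-s)) := by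
        simp_rw [hfactor, ENNReal.ofReal_mul (Real.rpow_nonneg hc.le _)]
        exact lintegral_const_mul' _ _ ENNReal.ofReal_ne_top
    _ = ENNReal.ofReal (c ^ (-2 * s)) *
          (ENNReal.ofReal c * ∫⁻ t : ℝ, ENNReal.ofReal ((1 + t ^ 2) ^ (-s))) := by
        rw [lintegral_comp_mul_left_real (fun t => ENNReal.ofReal ((1 + t ^ 2) ^ (-s)))
          (inv_ne_zero hc.ne'), inv_inv, abs_of_pos hc]
    _ = ENNReal.ofReal (c ^ (1 - 2 * s)) * ∫⁻ t : ℝ, ENNReal.ofReal ((1 + t ^ 2) ^ (-s)) := by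
        rw [← mul_assoc, ← ENNReal.ofReal_mul (Real.rpow_nonneg hc.le _),
          ← Real.rpow_add_one hc.ne', sub_eq_neg_add, neg_mul_eq_neg_mul]

theorem lintegral_prod_mul_sq_add_sq_rpow_neg {E : Type*} [NormedAddCommGroup E]
    [MeasurableSpace E] [OpensMeasurableSpace E] {μ : Measure E} [SFinite μ] (hμ : μ {0} = 0)
    (s : ℝ) {f : E → ℝ≥0∞} (hf : Measurable f) :
    ∫⁻ p : E × ℝ, f p.1 * ENNReal.ofReal ((‖p.1‖ ^ 2 + p.2 ^ 2) ^ (-s)) ∂μ.prod volume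
      = (∫⁻ t : ℝ, ENNReal.ofReal ((1 + t ^ 2) ^ (-s))) *
          ∫⁻ y, f y * ENNReal.ofReal (‖y‖ ^ (1 - 2 * s)) ∂μ := by
  rw [lintegral_prod _ (by fun_prop), ← lintegral_const_mul _ (by fun_prop)]
  refine lintegral_congr_ae ?_
  have hne : ∀ᵐ y ∂μ, y ≠ 0 := measure_eq_zero_iff_ae_notMem.mp hμ
  filter_upwards [hne] with y hy
  rw [lintegral_const_mul _ (by fun_prop), lintegral_sq_add_sq_rpow_neg s (norm_pos_iff.mpr hy)]
  ring

theorem extension_isometry_general (n : ℕ) (hn : 3 ≤ n) (u : ℝ)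
    (hu1 : 1 / ((n : ℝ) - 1) < u)
    (u' : ℝ) (hu' : u' = (((n : ℝ) - 1) * u - 1) / ((n : ℝ) - 2)) :
    Integrable (fun t : ℝ => (1 + t ^ 2) ^ (-(((n : ℝ) - 1) * u / 2))) ∧
    ∀ φ : EuclideanSpace ℝ (Fin (n - 2)) → ℂ, Measurable φ →
      ∫⁻ p : EuclideanSpace ℝ (Fin (n - 2)) × ℝ,
          (‖φ p.1‖₊ : ℝ≥0∞) ^ 2 *
            ENNReal.ofReal ((‖p.1‖ ^ 2 + p.2 ^ 2) ^ (-(((n : ℝ) - 1) * u / 2)))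
        = ENNReal.ofReal (∫ t : ℝ, (1 + t ^ 2) ^ (-(((n : ℝ) - 1) * u / 2))) *
            ∫⁻ y : EuclideanSpace ℝ (Fin (n - 2)),
              (‖φ y‖₊ : ℝ≥0∞) ^ 2 * ENNReal.ofReal (‖y‖ ^ (-(((n : ℝ) - 2) * u'))) := by
  have hn' : (3 : ℝ) ≤ n := by exact_mod_cast hn
  have hr : 1 < ((n : ℝ) - 1) * u := by
    rwa [div_lt_iff₀ (by linarith), mul_comm] at hu1
  have hC : Integrable (fun t : ℝ => (1 + t ^ 2) ^ (-(((n : ℝ) - 1) * u / 2))) := by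
    simpa [sq_abs, neg_div] using
      integrable_rpow_neg_one_add_norm_sq (E := ℝ) (μ := volume) (by simpa using hr)
  have hexp : -(((n : ℝ) - 2) * u') = 1 - 2 * (((n : ℝ) - 1) * u / 2) := by
    rw [hu', mul_div_cancel₀ _ (by linarith)]
    ring
  have : Nontrivial (EuclideanSpace ℝ (Fin (n - 2))) := by
    have : Nonempty (Fin (n - 2)) := ⟨⟨0, by omega⟩⟩
    infer_instance
  refine ⟨hC, fun φ hφ => ?_⟩
  rw [ofReal_integral_eq_lintegral_ofReal hC (ae_of_all _ fun t => by positivity), hexp]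
  exact lintegral_prod_mul_sq_add_sq_rpow_neg (measure_singleton 0) _
    (f := fun y => (‖φ y‖₊ : ℝ≥0∞) ^ 2) (by fun_prop)

/-- Proposition 3.5 of the paper: the extension map `J`, `(Jφ)(y,t) = φ(y)`, is an isometry
(up to the constant `C_u`) from `L²(ℝ^{n-2}, |y|^{-(n-2)u'} dy)` into
`L²(ℝ^{n-1}, |x|^{-(n-1)u} dx)`. -/
theorem extension_isometry (n : ℕ) (hn : 3 ≤ n) (u : ℝ)
    (hu1 : 1 / ((n : ℝ) - 1) < u) (hu2 : u < 1)
    (u' : ℝ) (hu' : u' = (((n : ℝ) - 1) * u - 1) / ((n : ℝ) - 2)) :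
    Integrable (fun t : ℝ => (1 + t ^ 2) ^ (-(((n : ℝ) - 1) * u / 2))) ∧
    ∀ φ : EuclideanSpace ℝ (Fin (n - 2)) → ℂ, Measurable φ →
      ∫⁻ p : EuclideanSpace ℝ (Fin (n - 2)) × ℝ,
          (‖φ p.1‖₊ : ℝ≥0∞) ^ 2 *
            ENNReal.ofReal ((‖p.1‖ ^ 2 + p.2 ^ 2) ^ (-(((n : ℝ) - 1) * u / 2)))
        = ENNReal.ofReal (∫ t : ℝ, (1 + t ^ 2) ^ (-(((n : ℝ) - 1) * u / 2))) *
            ∫⁻ y : EuclideanSpace ℝ (Fin (n - 2)),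
              (‖φ y‖₊ : ℝ≥0∞) ^ 2 * ENNReal.ofReal (‖y‖ ^ (-(((n : ℝ) - 2) * u'))) :=
  extension_isometry_general n hn u hu1 u' hu'
end

section
/- Let n ≥ 3, let 1/(n−1) < u < 1, and set u' = ((n−1)u − 1)/(n−2). Let g : ℝ^{n-2} → ℂ and f : ℝ^{n-2} × ℝ → ℂ be Schwartz functions, and for y ∈ ℝ^{n-2}, y ≠ 0, define h(y) = ∫_ℝ (1+s²)^{-(n-1)u/2} f(y, |y|·s) ds. Then all integrals below converge absolutely and ∫_{ℝ^{n-2} × ℝ} (|y|² + s²)^{-(n-1)u/2} conj(g(y)) f(y,s) dy ds = ∫_{ℝ^{n-2}} |y|^{-(n-2)u'} conj(g(y)) h(y) dy. -/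
open MeasureTheory
open scoped ComplexConjugate

/-!
Put `ν = (n-1)u`, so that `1 < ν < n - 1` and `-(n-2)u' = 1 - ν`. For fixed `y ≠ 0` the
substitution `s = ‖y‖ t` turns `(‖y‖² + s²)^{-ν/2} ds` into `‖y‖^{1-ν} (1 + t²)^{-ν/2} dt`, so the
inner integral of the left-hand side is `‖y‖^{1-ν} conj (g y) h y`. Fubini applies because the same
substitution bounds the inner integral of the absolute value by `C ‖y‖^{1-ν} ‖g y‖`, which is
integrable on `ℝ^{n-2}`: `g` is bounded and integrable, and `‖y‖^{1-ν}` is integrable near `0`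
since `ν - 1 < n - 2`.
-/

open Metric Module

section Line

variable {F : Type*} [NormedAddCommGroup F] [NormedSpace ℝ F] {ν r : ℝ}

lemma rpow_sq_add_mul_sq (r t p : ℝ) :
    (r ^ 2 + (r * t) ^ 2) ^ p = (r ^ 2) ^ p * (1 + t ^ 2) ^ p := by
  rw [show r ^ 2 + (r * t) ^ 2 = r ^ 2 * (1 + t ^ 2) by ring,
    Real.mul_rpow (sq_nonneg _) (by positivity)]

lemma mul_sq_rpow_neg_half (hr : 0 < r) (ν : ℝ) : r * (r ^ 2) ^ (-(ν / 2)) = r ^ (1 - ν) := by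
  rw [show 1 - ν = 1 + (2 : ℕ) * -(ν / 2) by push_cast; ring, Real.rpow_add hr, Real.rpow_one,
    Real.rpow_mul hr.le, Real.rpow_natCast]

lemma integrable_one_add_sq_rpow_neg (hν : 1 < ν) :
    Integrable fun s : ℝ => (1 + s ^ 2) ^ (-(ν / 2)) := by
  simpa [neg_div] using integrable_rpow_neg_one_add_norm_sq (E := ℝ) (μ := volume) (r := ν)
    (by simpa using hν)

lemma integrable_one_add_sq_rpow_neg_smul (hν : 1 < ν) {φ : ℝ → F}
    (hφ : AEStronglyMeasurable φ) {C : ℝ} (hφC : ∀ s, ‖φ s‖ ≤ C) :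
    Integrable fun s : ℝ => (1 + s ^ 2) ^ (-(ν / 2)) • φ s :=
  (integrable_one_add_sq_rpow_neg hν).smul_bdd C hφ (.of_forall hφC)

lemma integrable_sq_add_sq_rpow_neg_smul_iff (hr : 0 < r) (ν : ℝ) (φ : ℝ → F) :
    Integrable (fun s => (r ^ 2 + s ^ 2) ^ (-(ν / 2)) • φ s) ↔
      Integrable (fun t => (1 + t ^ 2) ^ (-(ν / 2)) • φ (r * t)) := by
  rw [← integrable_comp_mul_left_iff _ hr.ne']
  simp only [rpow_sq_add_mul_sq, mul_smul]
  exact integrable_fun_smul_iff (by positivity) _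

lemma integral_sq_add_sq_rpow_neg_smul (hr : 0 < r) (ν : ℝ) (φ : ℝ → F) :
    ∫ s, (r ^ 2 + s ^ 2) ^ (-(ν / 2)) • φ s =
      r ^ (1 - ν) • ∫ t, (1 + t ^ 2) ^ (-(ν / 2)) • φ (r * t) := by
  have h := Measure.integral_comp_mul_left (fun s => (r ^ 2 + s ^ 2) ^ (-(ν / 2)) • φ s) r
  rw [abs_inv, abs_of_pos hr, eq_inv_smul_iff₀ hr.ne'] at h
  simp only [rpow_sq_add_mul_sq, mul_smul, integral_smul] at h
  rw [← h, smul_smul, mul_sq_rpow_neg_half hr]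

lemma integral_norm_sq_add_sq_rpow_neg_smul_le (hν : 1 < ν) (hr : 0 < r) {φ : ℝ → F} {C : ℝ}
    (hφC : ∀ s, ‖φ s‖ ≤ C) :
    ∫ s, ‖(r ^ 2 + s ^ 2) ^ (-(ν / 2)) • φ s‖ ≤
      r ^ (1 - ν) * ((∫ t, (1 + t ^ 2) ^ (-(ν / 2))) * C) := by
  have hnorm : ∀ s, ‖(r ^ 2 + s ^ 2) ^ (-(ν / 2)) • φ s‖ = (r ^ 2 + s ^ 2) ^ (-(ν / 2)) • ‖φ s‖ :=
    fun s => by rw [norm_smul, Real.norm_of_nonneg (by positivity), smul_eq_mul]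
  simp only [hnorm]
  rw [integral_sq_add_sq_rpow_neg_smul hr, smul_eq_mul, ← integral_mul_const]
  refine mul_le_mul_of_nonneg_left ?_ (by positivity)
  refine integral_mono_of_nonneg (.of_forall fun t => by positivity)
    ((integrable_one_add_sq_rpow_neg hν).mul_const C) (.of_forall fun t => ?_)
  exact mul_le_mul_of_nonneg_left (hφC _) (by positivity)

end Line

theorem MeasureTheory.Integrable.norm_rpow_neg_smul {E F : Type*} [NormedAddCommGroup E]
    [NormedSpace ℝ E] [FiniteDimensional ℝ E] [MeasurableSpace E] [BorelSpace E]
    {μ : Measure E} [μ.IsAddHaarMeasure] [NormedAddCommGroup F] [NormedSpace ℝ F]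
    {g : E → F} (hg : Integrable g μ) {C : ℝ} (hgC : ∀ x, ‖g x‖ ≤ C) {β : ℝ} (hβ0 : 0 ≤ β)
    (hβ : β < finrank ℝ E) :
    Integrable (fun x => ‖x‖ ^ (-β) • g x) μ := by
  have hmeas : AEStronglyMeasurable (fun x => ‖x‖ ^ (-β) • g x) μ :=
    (by fun_prop : Measurable fun x : E => ‖x‖ ^ (-β)).aestronglyMeasurable.smul hg.1
  rw [← integrableOn_univ, ← Set.union_compl_self (ball (0 : E) 1)]
  refine .union (integrableOn_ball_of_norm_le_rpow (C := C) (by exact_mod_cast hβ0.trans_lt hβ)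
    hβ (.of_forall fun x => ?_) hmeas) (hg.norm.integrableOn.mono' hmeas.restrict ?_)
  · rw [norm_smul, Real.norm_of_nonneg (by positivity), mul_comm]
    gcongr
    exact hgC x
  · filter_upwards [ae_restrict_mem measurableSet_ball.compl] with x hx
    have hx1 : 1 ≤ ‖x‖ := by simpa using hx
    rw [norm_smul, Real.norm_of_nonneg (by positivity)]
    exact mul_le_of_le_one_left (norm_nonneg _)
      (Real.rpow_le_one_of_one_le_of_nonpos hx1 (by linarith))

section Cone

variable {E F : Type*} [NormedAddCommGroup E] [NormedAddCommGroup F] [NormedSpace ℝ F]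

/-- The paper's `h = J* f`. -/
noncomputable def scaledFiberIntegral (ν : ℝ) (f : E × ℝ → F) (y : E) : F :=
  ∫ t, (1 + t ^ 2) ^ (-(ν / 2)) • f (y, ‖y‖ * t)

lemma integral_fiber_eq_scaledFiberIntegral {y : E} (hy : y ≠ 0) (ν : ℝ) (f : E × ℝ → F) :
    ∫ s, (‖y‖ ^ 2 + s ^ 2) ^ (-(ν / 2)) • f (y, s) =
      ‖y‖ ^ (1 - ν) • scaledFiberIntegral ν f y :=
  integral_sq_add_sq_rpow_neg_smul (norm_pos_iff.2 hy) ν _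

variable [MeasurableSpace E] [OpensMeasurableSpace E] {μ : Measure E} [NullSingletonClass μ]
  {ν : ℝ} {f : E × ℝ → F} {b : E → ℝ}

theorem integrable_prod_sq_add_sq_rpow_neg_smul (hν : 1 < ν) (hf : StronglyMeasurable f)
    (hfb : ∀ y s, ‖f (y, s)‖ ≤ b y) (hb : Integrable (fun y => ‖y‖ ^ (1 - ν) * b y) μ) :
    Integrable (fun p : E × ℝ => (‖p.1‖ ^ 2 + p.2 ^ 2) ^ (-(ν / 2)) • f p) (μ.prod volume) := by
  have hmeas : AEStronglyMeasurable
      (fun p : E × ℝ => (‖p.1‖ ^ 2 + p.2 ^ 2) ^ (-(ν / 2)) • f p) (μ.prod volume) :=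
    ((by fun_prop : Measurable fun p : E × ℝ => (‖p.1‖ ^ 2 + p.2 ^ 2) ^ (-(ν / 2)))
      |>.stronglyMeasurable.smul hf).aestronglyMeasurable
  refine (integrable_prod_iff hmeas).2 ⟨?_, ?_⟩
  · filter_upwards [μ.ae_ne 0] with y hy
    refine (integrable_sq_add_sq_rpow_neg_smul_iff (norm_pos_iff.2 hy) ν _).2
      (integrable_one_add_sq_rpow_neg_smul hν ?_ fun t => hfb y _)
    exact (hf.comp_measurable (measurable_prodMk_left.comp (measurable_const_mul _)))
      |>.aestronglyMeasurable
  · refine (hb.const_mul (∫ t, (1 + t ^ 2) ^ (-(ν / 2)))).mono'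
      hmeas.norm.integral_prod_right' ?_
    filter_upwards [μ.ae_ne 0] with y hy
    rw [Real.norm_of_nonneg (integral_nonneg fun _ => norm_nonneg _), mul_left_comm]
    exact integral_norm_sq_add_sq_rpow_neg_smul_le hν (norm_pos_iff.2 hy) (hfb y)

theorem integrable_norm_rpow_smul_scaledFiberIntegral (hν : 1 < ν) (hf : StronglyMeasurable f)
    (hfb : ∀ y s, ‖f (y, s)‖ ≤ b y) (hb : Integrable (fun y => ‖y‖ ^ (1 - ν) * b y) μ) :
    Integrable (fun y => ‖y‖ ^ (1 - ν) • scaledFiberIntegral ν f y) μ :=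
  (integrable_prod_sq_add_sq_rpow_neg_smul hν hf hfb hb).integral_prod_left.congr <| by
    filter_upwards [μ.ae_ne 0] with y hy using integral_fiber_eq_scaledFiberIntegral hy ν f

theorem integral_prod_sq_add_sq_rpow_neg_smul [SFinite μ] (hν : 1 < ν)
    (hf : StronglyMeasurable f) (hfb : ∀ y s, ‖f (y, s)‖ ≤ b y)
    (hb : Integrable (fun y => ‖y‖ ^ (1 - ν) * b y) μ) :
    ∫ p, (‖p.1‖ ^ 2 + p.2 ^ 2) ^ (-(ν / 2)) • f p ∂(μ.prod volume) =
      ∫ y, ‖y‖ ^ (1 - ν) • scaledFiberIntegral ν f y ∂μ := by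
  rw [integral_prod _ (integrable_prod_sq_add_sq_rpow_neg_smul hν hf hfb hb)]
  refine integral_congr_ae ?_
  filter_upwards [μ.ae_ne 0] with y hy using integral_fiber_eq_scaledFiberIntegral hy ν f

end Cone

/-- The adjoint identity inside Proposition 3.7 of the paper: `⟨Jg, f⟩ = ⟨g, h⟩` in the
weighted `L²` spaces, where `h = J*f` is given by
`h(y) = ∫ (1+s²)^{-(n-1)u/2} f(y, |y|s) ds`. -/
theorem adjoint_of_extension (n : ℕ) (hn : 3 ≤ n) (u : ℝ)
    (hu1 : 1 / ((n : ℝ) - 1) < u) (hu2 : u < 1)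
    (u' : ℝ) (hu' : u' = (((n : ℝ) - 1) * u - 1) / ((n : ℝ) - 2))
    (g : SchwartzMap (EuclideanSpace ℝ (Fin (n - 2))) ℂ)
    (f : SchwartzMap (EuclideanSpace ℝ (Fin (n - 2)) × ℝ) ℂ)
    (h : EuclideanSpace ℝ (Fin (n - 2)) → ℂ)
    (hh : ∀ y : EuclideanSpace ℝ (Fin (n - 2)), y ≠ 0 →
      h y = ∫ s : ℝ, (((1 + s ^ 2) ^ (-(((n : ℝ) - 1) * u / 2)) : ℝ) : ℂ) * f (y, ‖y‖ * s)) :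
    (∀ y : EuclideanSpace ℝ (Fin (n - 2)), y ≠ 0 →
      Integrable (fun s : ℝ =>
        (((1 + s ^ 2) ^ (-(((n : ℝ) - 1) * u / 2)) : ℝ) : ℂ) * f (y, ‖y‖ * s))) ∧
    Integrable (fun p : EuclideanSpace ℝ (Fin (n - 2)) × ℝ =>
        (((‖p.1‖ ^ 2 + p.2 ^ 2) ^ (-(((n : ℝ) - 1) * u / 2)) : ℝ) : ℂ) *
          conj (g p.1) * f p) ∧
    Integrable (fun y : EuclideanSpace ℝ (Fin (n - 2)) =>
        ((‖y‖ ^ (-(((n : ℝ) - 2) * u')) : ℝ) : ℂ) * conj (g y) * h y) ∧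
    ∫ p : EuclideanSpace ℝ (Fin (n - 2)) × ℝ,
        (((‖p.1‖ ^ 2 + p.2 ^ 2) ^ (-(((n : ℝ) - 1) * u / 2)) : ℝ) : ℂ) *
          conj (g p.1) * f p
      = ∫ y : EuclideanSpace ℝ (Fin (n - 2)),
          ((‖y‖ ^ (-(((n : ℝ) - 2) * u')) : ℝ) : ℂ) * conj (g y) * h y := by
  have hn3 : (3 : ℝ) ≤ n := by exact_mod_cast hn
  have hν : 1 < ((n : ℝ) - 1) * u := by rwa [div_lt_iff₀' (by linarith)] at hu1
  have hdim : ((n : ℝ) - 1) * u - 1 < finrank ℝ (EuclideanSpace ℝ (Fin (n - 2))) := by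
    rw [finrank_euclideanSpace_fin, Nat.cast_sub (by omega)]
    push_cast
    nlinarith
  have hexp : -(((n : ℝ) - 2) * u') = 1 - ((n : ℝ) - 1) * u := by
    rw [hu', mul_div_cancel₀ _ (by linarith)]
    ring
  have : Nontrivial (EuclideanSpace ℝ (Fin (n - 2))) :=
    nontrivial_of_finrank_pos (R := ℝ) (by rw [finrank_euclideanSpace_fin]; omega)
  have hgf : StronglyMeasurable fun p : EuclideanSpace ℝ (Fin (n - 2)) × ℝ => conj (g p.1) * f p :=
    (by fun_prop : Continuous fun p : EuclideanSpace ℝ (Fin (n - 2)) × ℝ => conj (g p.1) * f p)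
      |>.stronglyMeasurable
  have hgf_le : ∀ y s, ‖conj (g y) * f (y, s)‖ ≤ ‖g y‖ * SchwartzMap.seminorm ℝ 0 0 f :=
    fun y s => by
      rw [norm_mul, RCLike.norm_conj]
      exact mul_le_mul_of_nonneg_left (f.norm_le_seminorm ℝ _) (norm_nonneg _)
  have hb : Integrable fun y : EuclideanSpace ℝ (Fin (n - 2)) =>
      ‖y‖ ^ (1 - ((n : ℝ) - 1) * u) * (‖g y‖ * SchwartzMap.seminorm ℝ 0 0 f) := by
    refine ((g.integrable.norm_rpow_neg_smul (g.norm_le_seminorm ℝ) (by linarith)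
      hdim).norm.mul_const (SchwartzMap.seminorm ℝ 0 0 f)).congr (.of_forall fun y => ?_)
    simp only [norm_smul, neg_sub, Real.norm_of_nonneg (Real.rpow_nonneg (norm_nonneg y) _),
      mul_assoc]
  simp only [← Complex.real_smul, smul_mul_assoc] at hh ⊢
  rw [Measure.volume_eq_prod, hexp]
  have hfiber : ∀ y, y ≠ 0 →
      scaledFiberIntegral (((n : ℝ) - 1) * u) (fun p => conj (g p.1) * f p) y = conj (g y) * h y :=
    fun y hy => by simp only [scaledFiberIntegral, ← mul_smul_comm, integral_const_mul, hh y hy]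
  refine ⟨fun y _ => integrable_one_add_sq_rpow_neg_smul hν (by fun_prop)
      fun s => f.norm_le_seminorm ℝ _,
    integrable_prod_sq_add_sq_rpow_neg_smul hν hgf hgf_le hb,
    (integrable_norm_rpow_smul_scaledFiberIntegral hν hgf hgf_le hb).congr ?_,
    (integral_prod_sq_add_sq_rpow_neg_smul hν hgf hgf_le hb).trans (integral_congr_ae ?_)⟩ <;>
  filter_upwards [volume.ae_ne 0] with y hy
  <;> rw [hfiber y hy]
end

section
/- Let n ≥ 3, let 1/(n−1) < u < 1, and set u' = ((n−1)u − 1)/(n−2). Let f : ℝ^{n-2} × ℝ → ℂ be a Schwartz function and for y ≠ 0 define h(y) = ∫_ℝ (1+s²)^{-(n-1)u/2} f(y, |y|·s) ds. Then for every x ∈ ℝ^{n-2}, both integrals below converge absolutely and ∫_{ℝ^{n-2}} |y|^{-(n-2)u'} h(y) e^{-2πi⟨x,y⟩} dy = ∫_{ℝ^{n-2} × ℝ} (|y|² + s²)^{-(n-1)u/2} f(y,s) e^{-2πi⟨x,y⟩} dy ds. -/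
/-!
Substituting `s = |y| t` in the inner integral gives, for `y ≠ 0`,
`|y|^{1 - (n-1)u} h(y) = ∫ (|y|² + s²)^{-(n-1)u/2} f(y, s) ds`, and `1 - (n-1)u = -(n-2)u'`.
So the left-hand side is the iterated form of the right-hand one, and Fubini applies once the
weighted integrand is integrable on `ℝ^{n-1}`: the weight is at most `|p|^{-(n-1)u}`, which is
locally integrable because `(n-1)u < n-1`, and at most `1` away from the unit ball, where the
integrability of `f` takes over.
-/

open MeasureTheory Real
open scoped RealInnerProductSpace

lemma rpow_norm_sq_add_sq_le_norm_rpow {E : Type*} [SeminormedAddCommGroup E] {a : ℝ} (ha : 0 ≤ a)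
    (p : E × ℝ) : (‖p.1‖ ^ 2 + p.2 ^ 2) ^ (-a) ≤ ‖p‖ ^ (-(2 * a)) := by
  rcases ha.eq_or_lt with rfl | ha
  · simp
  rcases eq_or_ne ‖p‖ 0 with hp | hp
  · have h1 : ‖p.1‖ = 0 := le_antisymm (hp ▸ norm_fst_le p) (norm_nonneg _)
    have h2 : p.2 = 0 := norm_eq_zero.1 (le_antisymm (hp ▸ norm_snd_le p) (norm_nonneg _))
    simp [h1, h2, hp, zero_rpow (neg_ne_zero.2 ha.ne'), zero_rpow (by linarith : -(2 * a) ≠ 0)]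
  have hsq : ‖p‖ ^ 2 ≤ ‖p.1‖ ^ 2 + p.2 ^ 2 := by
    rcases max_cases ‖p.1‖ ‖p.2‖ with ⟨h, _⟩ | ⟨h, _⟩ <;>
      rw [Prod.norm_def, h] <;> simp [sq_nonneg]
  calc (‖p.1‖ ^ 2 + p.2 ^ 2) ^ (-a) ≤ (‖p‖ ^ 2) ^ (-a) :=
        rpow_le_rpow_of_nonpos (by positivity) hsq (by linarith)
    _ = ‖p‖ ^ (-(2 * a)) := by
        rw [← rpow_natCast, ← rpow_mul (norm_nonneg p)]
        norm_num

lemma integral_rpow_sq_add_sq_mul (a : ℝ) {c : ℝ} (hc : 0 < c) (g : ℝ → ℂ) :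
    ∫ s : ℝ, (((c ^ 2 + s ^ 2) ^ (-a) : ℝ) : ℂ) * g s
      = ((c ^ (1 - 2 * a) : ℝ) : ℂ) * ∫ t : ℝ, (((1 + t ^ 2) ^ (-a) : ℝ) : ℂ) * g (c * t) := by
  have hscale : ∀ t : ℝ, (c ^ 2 + (c * t) ^ 2) ^ (-a) = c ^ (-(2 * a)) * (1 + t ^ 2) ^ (-a) := by
    intro t
    rw [show c ^ 2 + (c * t) ^ 2 = c ^ 2 * (1 + t ^ 2) by ring,
      mul_rpow (by positivity) (by positivity), ← rpow_natCast, ← rpow_mul hc.le]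
    norm_num
  have hsubst := Measure.integral_comp_mul_left
    (fun s : ℝ => (((c ^ 2 + s ^ 2) ^ (-a) : ℝ) : ℂ) * g s) c
  simp only [hscale, Complex.ofReal_mul, mul_assoc, integral_const_mul] at hsubst
  rw [abs_inv, abs_of_pos hc, eq_inv_smul_iff₀ hc.ne', Complex.real_smul] at hsubst
  rw [← hsubst, sub_eq_add_neg, rpow_add hc, rpow_one, Complex.ofReal_mul, mul_assoc]

open Metric in
lemma integrable_of_norm_le_rpow_mul_norm {E F G : Type*} [NormedAddCommGroup E]
    [NormedSpace ℝ E] [FiniteDimensional ℝ E] [MeasurableSpace E] [BorelSpace E]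
    [NormedAddCommGroup F] [NormedAddCommGroup G] {μ : Measure E} [μ.IsAddHaarMeasure]
    (hd : 1 ≤ Module.finrank ℝ E) {r C : ℝ} (hr0 : 0 ≤ r) (hr : r < Module.finrank ℝ E)
    {f : E → F} (hf : Integrable f μ) (hfC : ∀ x, ‖f x‖ ≤ C)
    {g : E → G} (hg : AEStronglyMeasurable g μ) (hgf : ∀ᵐ x ∂μ, ‖g x‖ ≤ ‖x‖ ^ (-r) * ‖f x‖) :
    Integrable g μ := by
  rw [← integrableOn_univ, ← Set.union_compl_self (ball (0 : E) 1)]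
  refine IntegrableOn.union ?_ ?_
  · refine integrableOn_ball_of_norm_le_rpow (C := C) hd hr (ae_restrict_of_ae ?_) hg
    filter_upwards [hgf] with x hx
    calc ‖g x‖ ≤ ‖x‖ ^ (-r) * ‖f x‖ := hx
      _ ≤ C * ‖x‖ ^ (-r) := by rw [mul_comm]; gcongr; exact hfC x
  · refine hf.norm.integrableOn.mono' hg.restrict ?_
    rw [ae_restrict_iff' measurableSet_ball.compl]
    filter_upwards [hgf] with x hx hx1
    have hx1 : 1 ≤ ‖x‖ := by simpa using hx1
    calc ‖g x‖ ≤ ‖x‖ ^ (-r) * ‖f x‖ := hx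
      _ ≤ 1 * ‖f x‖ := by gcongr; exact rpow_le_one_of_one_le_of_nonpos hx1 (by linarith)
      _ = ‖f x‖ := one_mul _

lemma SchwartzMap.integrable_rpow_norm_sq_add_sq_mul_exp_inner {E : Type*}
    [NormedAddCommGroup E] [InnerProductSpace ℝ E] [FiniteDimensional ℝ E] [MeasureSpace E]
    [BorelSpace E] [(volume : Measure E).IsAddHaarMeasure] {a : ℝ} (ha0 : 0 ≤ a)
    (ha : 2 * a < Module.finrank ℝ E + 1) (f : SchwartzMap (E × ℝ) ℂ) (x : E) :
    Integrable (fun p : E × ℝ => (((‖p.1‖ ^ 2 + p.2 ^ 2) ^ (-a) : ℝ) : ℂ) * f p *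
      Complex.exp (-(2 * (π : ℂ) * Complex.I * ((⟪x, p.1⟫ : ℝ) : ℂ))))
      ((volume : Measure E).prod volume) := by
  have hfinrank : Module.finrank ℝ (E × ℝ) = Module.finrank ℝ E + 1 := by
    rw [Module.finrank_prod, Module.finrank_self]
  refine integrable_of_norm_le_rpow_mul_norm (r := 2 * a) (by omega) (by linarith)
    (by rw [hfinrank]; push_cast; exact ha) f.integrable (f.norm_le_seminorm ℂ) ?_
    (ae_of_all _ fun p => ?_)
  · have := f.continuous.measurable
    exact (by fun_prop : Measurable _).aestronglyMeasurable
  · have hphase : ‖Complex.exp (-(2 * (π : ℂ) * Complex.I * ((⟪x, p.1⟫ : ℝ) : ℂ)))‖ = 1 := by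
      simp [Complex.norm_exp]
    rw [norm_mul, norm_mul, hphase, mul_one, Complex.norm_real, norm_of_nonneg (by positivity)]
    exact mul_le_mul_of_nonneg_right (rpow_norm_sq_add_sq_le_norm_rpow ha0 p) (norm_nonneg _)

lemma MeasureTheory.Integrable.integrable_and_integral_eq_of_ae_eq_integral_prod_left
    {α β E : Type*} [MeasurableSpace α] [MeasurableSpace β] {μ : Measure α} {ν : Measure β}
    [SFinite μ] [SFinite ν] [NormedAddCommGroup E] [NormedSpace ℝ E]
    {F : α × β → E} (hF : Integrable F (μ.prod ν)) {g : α → E}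
    (hg : g =ᵐ[μ] fun x => ∫ y, F (x, y) ∂ν) :
    Integrable g μ ∧ ∫ x, g x ∂μ = ∫ p, F p ∂μ.prod ν :=
  ⟨hF.integral_prod_left.congr hg.symm, (integral_congr_ae hg).trans (integral_prod F hF).symm⟩

/-- Proposition 3.7 of the paper in concrete form: `A_H ∘ J* = res ∘ A_G`, i.e. the weighted
Fourier transform of `h = J*f` on `ℝ^{n-2}` agrees with the weighted Fourier transform of `f`
on `ℝ^{n-1}` restricted to frequencies in `ℝ^{n-2}`. -/
theorem adjoint_is_restriction (n : ℕ) (hn : 3 ≤ n) (u : ℝ)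
    (hu1 : 1 / ((n : ℝ) - 1) < u) (hu2 : u < 1)
    (u' : ℝ) (hu' : u' = (((n : ℝ) - 1) * u - 1) / ((n : ℝ) - 2))
    (f : SchwartzMap (EuclideanSpace ℝ (Fin (n - 2)) × ℝ) ℂ)
    (h : EuclideanSpace ℝ (Fin (n - 2)) → ℂ)
    (hh : ∀ y : EuclideanSpace ℝ (Fin (n - 2)), y ≠ 0 →
      h y = ∫ s : ℝ, (((1 + s ^ 2) ^ (-(((n : ℝ) - 1) * u / 2)) : ℝ) : ℂ) * f (y, ‖y‖ * s)) :
    ∀ x : EuclideanSpace ℝ (Fin (n - 2)),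
      Integrable (fun y : EuclideanSpace ℝ (Fin (n - 2)) =>
          ((‖y‖ ^ (-(((n : ℝ) - 2) * u')) : ℝ) : ℂ) * h y *
            Complex.exp (-(2 * (π : ℂ) * Complex.I * ((⟪x, y⟫ : ℝ) : ℂ)))) ∧
      Integrable (fun p : EuclideanSpace ℝ (Fin (n - 2)) × ℝ =>
          (((‖p.1‖ ^ 2 + p.2 ^ 2) ^ (-(((n : ℝ) - 1) * u / 2)) : ℝ) : ℂ) * f p *
            Complex.exp (-(2 * (π : ℂ) * Complex.I * ((⟪x, p.1⟫ : ℝ) : ℂ)))) ∧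
      ∫ y : EuclideanSpace ℝ (Fin (n - 2)),
          ((‖y‖ ^ (-(((n : ℝ) - 2) * u')) : ℝ) : ℂ) * h y *
            Complex.exp (-(2 * (π : ℂ) * Complex.I * ((⟪x, y⟫ : ℝ) : ℂ)))
        = ∫ p : EuclideanSpace ℝ (Fin (n - 2)) × ℝ,
            (((‖p.1‖ ^ 2 + p.2 ^ 2) ^ (-(((n : ℝ) - 1) * u / 2)) : ℝ) : ℂ) * f p *
              Complex.exp (-(2 * (π : ℂ) * Complex.I * ((⟪x, p.1⟫ : ℝ) : ℂ))) := by
  intro x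
  set a := ((n : ℝ) - 1) * u / 2 with ha
  have hn3 : (3 : ℝ) ≤ n := by exact_mod_cast hn
  have hu0 : 1 < ((n : ℝ) - 1) * u := by
    rwa [div_lt_iff₀ (by linarith), mul_comm] at hu1
  have ha_lt : 2 * a < Module.finrank ℝ (EuclideanSpace ℝ (Fin (n - 2))) + 1 := by
    simp only [finrank_euclideanSpace_fin, Nat.cast_sub (by omega : 2 ≤ n), Nat.cast_ofNat, ha]
    nlinarith
  have hexp : -(((n : ℝ) - 2) * u') = 1 - 2 * a := by
    rw [hu', mul_div_cancel₀ _ (by linarith)]; ring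
  have hslice : ∀ y : EuclideanSpace ℝ (Fin (n - 2)), y ≠ 0 →
      ((‖y‖ ^ (-(((n : ℝ) - 2) * u')) : ℝ) : ℂ) * h y *
        Complex.exp (-(2 * (π : ℂ) * Complex.I * ((⟪x, y⟫ : ℝ) : ℂ)))
      = ∫ s, (((‖y‖ ^ 2 + s ^ 2) ^ (-a) : ℝ) : ℂ) * f (y, s) *
        Complex.exp (-(2 * (π : ℂ) * Complex.I * ((⟪x, y⟫ : ℝ) : ℂ))) := by
    intro y hy
    rw [integral_mul_const, integral_rpow_sq_add_sq_mul a (norm_pos_iff.2 hy), ← hh y hy, hexp]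
  have hF := f.integrable_rpow_norm_sq_add_sq_mul_exp_inner (by linarith) ha_lt x
  have : Nonempty (Fin (n - 2)) := ⟨⟨0, by omega⟩⟩
  rw [Measure.volume_eq_prod]
  obtain ⟨hint, heq⟩ :=
    hF.integrable_and_integral_eq_of_ae_eq_integral_prod_left ((Measure.ae_ne volume 0).mono hslice)
  exact ⟨hint, hF, heq⟩
end

section
/- Let n ≥ 3, let 1/(n−1) < u < 1, set u' = ((n−1)u − 1)/(n−2) and C_u = ∫_ℝ (1+t²)^{-(n-1)u/2} dt. Let f : ℝ^{n-2} × ℝ → ℂ be a Schwartz function and for y ≠ 0 define h(y) = ∫_ℝ (1+s²)^{-(n-1)u/2} f(y, |y|·s) ds. Then ∫_{ℝ^{n-2}} |y|^{-(n-2)u'} |h(y)|² dy ≤ C_u · ∫_{ℝ^{n-2} × ℝ} (|y|² + s²)^{-(n-1)u/2} |f(y,s)|² dy ds. -/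
/-!
Fix `y ≠ 0`, put `c = ‖y‖` and `w(s) = (1 + s²)^(-α)` with `α = (n-1)u/2`, so that `2α > 1` and
`w` is integrable. Cauchy–Schwarz for the measure `w ds` gives
`|h(y)|² ≤ (∫ w) · ∫ w(s) |f(y, cs)|² ds`, and the substitution `t = cs`, together with
`(1 + s²)^(-α) = c^(2α) (c² + (cs)²)^(-α)`, turns the last integral into
`c^(2α-1) ∫ (c² + t²)^(-α) |f(y,t)|² dt`. Since `(n-2)u' = 2α - 1`, the power of `c` is exactly
cancelled by the weight `|y|^(-(n-2)u')`; integrating over `y` (Tonelli) gives the claim.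
-/

open MeasureTheory
open scoped ENNReal

theorem ENNReal.lintegral_mul_sq_le {X : Type*} [MeasurableSpace X] {μ : Measure X}
    {w g : X → ℝ≥0∞} (hw : AEMeasurable w μ) (hg : AEMeasurable g μ) :
    (∫⁻ x, w x * g x ∂μ) ^ 2 ≤ (∫⁻ x, w x ∂μ) * ∫⁻ x, w x * g x ^ 2 ∂μ := by
  have hsplit : ∀ x, w x * g x = w x ^ (1 / 2 : ℝ) * (w x * g x ^ 2) ^ (1 / 2 : ℝ) := by
    intro x
    rw [ENNReal.mul_rpow_of_nonneg _ _ (by norm_num), ← mul_assoc,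
      ← ENNReal.rpow_add_of_nonneg _ _ (by norm_num) (by norm_num), ← ENNReal.rpow_natCast,
      ← ENNReal.rpow_mul]
    norm_num
  have holder := ENNReal.lintegral_mul_norm_pow_le hw (hw.mul (hg.pow_const 2))
    (by norm_num : (0 : ℝ) ≤ 1 / 2) (by norm_num : (0 : ℝ) ≤ 1 / 2) (by norm_num)
  calc (∫⁻ x, w x * g x ∂μ) ^ 2
      ≤ ((∫⁻ x, w x ∂μ) ^ (1 / 2 : ℝ) * (∫⁻ x, w x * g x ^ 2 ∂μ) ^ (1 / 2 : ℝ)) ^ 2 := by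
        rw [lintegral_congr hsplit]
        gcongr
        exact holder
    _ = (∫⁻ x, w x ∂μ) * ∫⁻ x, w x * g x ^ 2 ∂μ := by
        rw [mul_pow, ← ENNReal.rpow_natCast, ← ENNReal.rpow_natCast, ← ENNReal.rpow_mul,
          ← ENNReal.rpow_mul]
        norm_num

theorem enorm_integral_ofReal_mul_sq_le {X : Type*} [MeasurableSpace X] {μ : Measure X}
    {w : X → ℝ} {φ : X → ℂ} (hw₀ : ∀ x, 0 ≤ w x) (hw : Measurable w) (hφ : AEMeasurable φ μ) :
    ‖∫ x, (w x : ℂ) * φ x ∂μ‖ₑ ^ 2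
      ≤ (∫⁻ x, ENNReal.ofReal (w x) ∂μ) * ∫⁻ x, ENNReal.ofReal (w x) * ‖φ x‖ₑ ^ 2 ∂μ := by
  have hpt : ∀ x, ‖(w x : ℂ) * φ x‖ₑ = ENNReal.ofReal (w x) * ‖φ x‖ₑ := fun x => by
    rw [enorm_mul, ← ofReal_norm, Complex.norm_real, Real.norm_of_nonneg (hw₀ x)]
  calc ‖∫ x, (w x : ℂ) * φ x ∂μ‖ₑ ^ 2
      ≤ (∫⁻ x, ENNReal.ofReal (w x) * ‖φ x‖ₑ ∂μ) ^ 2 := by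
        rw [← lintegral_congr hpt]
        gcongr
        exact enorm_integral_le_lintegral_enorm _
    _ ≤ _ := ENNReal.lintegral_mul_sq_le hw.ennreal_ofReal.aemeasurable hφ.enorm

theorem Real.lintegral_comp_mul_left (G : ℝ → ℝ≥0∞) {c : ℝ} (hc : c ≠ 0) :
    ∫⁻ s, G (c * s) = ENNReal.ofReal |c⁻¹| * ∫⁻ t, G t := by
  rw [← (measurableEmbedding_mulLeft₀ hc).lintegral_map,
    Real.map_volume_mul_left hc, lintegral_smul_measure, smul_eq_mul]

theorem one_add_sq_rpow_neg_eq (α : ℝ) {c : ℝ} (hc : 0 < c) (s : ℝ) :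
    (1 + s ^ 2) ^ (-α) = c ^ (2 * α) * (c ^ 2 + (c * s) ^ 2) ^ (-α) := by
  rw [show c ^ 2 + (c * s) ^ 2 = c ^ 2 * (1 + s ^ 2) by ring,
    Real.mul_rpow (by positivity) (by positivity), ← mul_assoc, ← Real.rpow_natCast c 2,
    ← Real.rpow_mul hc.le, ← Real.rpow_add hc]
  norm_num

theorem lintegral_one_add_sq_rpow_neg_mul_comp_mul_left (α : ℝ) {c : ℝ} (hc : 0 < c)
    (F : ℝ → ℝ≥0∞) :
    ∫⁻ s, ENNReal.ofReal ((1 + s ^ 2) ^ (-α)) * F (c * s)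
      = ENNReal.ofReal (c ^ (2 * α - 1)) * ∫⁻ t, ENNReal.ofReal ((c ^ 2 + t ^ 2) ^ (-α)) * F t := by
  simp_rw [one_add_sq_rpow_neg_eq α hc, ENNReal.ofReal_mul (Real.rpow_nonneg hc.le _), mul_assoc]
  rw [lintegral_const_mul' _ _ ENNReal.ofReal_ne_top,
    Real.lintegral_comp_mul_left (fun t => ENNReal.ofReal ((c ^ 2 + t ^ 2) ^ (-α)) * F t) hc.ne',
    ← mul_assoc, ← ENNReal.ofReal_mul (by positivity), abs_of_pos (inv_pos.2 hc),
    ← Real.rpow_neg_one, ← Real.rpow_add hc, ← sub_eq_add_neg]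

theorem integrable_one_add_sq_rpow_neg_s9 {α : ℝ} (hα : 1 < 2 * α) :
    Integrable (fun t : ℝ => (1 + t ^ 2) ^ (-α)) := by
  have := integrable_rpow_neg_one_add_norm_sq (E := ℝ) (μ := volume) (r := 2 * α) (by simpa using hα)
  simpa [Real.norm_eq_abs, sq_abs, neg_div] using this

theorem rpow_mul_enorm_integral_sq_le {α c : ℝ} (hc : 0 < c) {φ : ℝ → ℂ} (hφ : Measurable φ) :
    ENNReal.ofReal (c ^ (1 - 2 * α)) *
        ‖∫ s, (((1 + s ^ 2) ^ (-α) : ℝ) : ℂ) * φ (c * s)‖ₑ ^ 2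
      ≤ (∫⁻ s, ENNReal.ofReal ((1 + s ^ 2) ^ (-α))) *
          ∫⁻ t, ENNReal.ofReal ((c ^ 2 + t ^ 2) ^ (-α)) * ‖φ t‖ₑ ^ 2 := by
  have hcs := enorm_integral_ofReal_mul_sq_le (μ := volume) (φ := fun s => φ (c * s))
    (fun s => by positivity)
    (by fun_prop : Measurable fun s : ℝ => (1 + s ^ 2) ^ (-α))
    (hφ.comp (measurable_const_mul c)).aemeasurable
  rw [lintegral_one_add_sq_rpow_neg_mul_comp_mul_left α hc (fun t => ‖φ t‖ₑ ^ 2)] at hcs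
  calc _ ≤ ENNReal.ofReal (c ^ (1 - 2 * α)) * ((∫⁻ s, ENNReal.ofReal ((1 + s ^ 2) ^ (-α))) *
        (ENNReal.ofReal (c ^ (2 * α - 1)) *
          ∫⁻ t, ENNReal.ofReal ((c ^ 2 + t ^ 2) ^ (-α)) * ‖φ t‖ₑ ^ 2)) := by gcongr
    _ = _ := by
      have hcancel : ENNReal.ofReal (c ^ (1 - 2 * α)) * ENNReal.ofReal (c ^ (2 * α - 1)) = 1 := by
        rw [← ENNReal.ofReal_mul (by positivity), ← Real.rpow_add hc]
        simp
      rw [mul_left_comm, ← mul_assoc (ENNReal.ofReal _), hcancel, one_mul]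

theorem restriction_continuous_general (n : ℕ) (hn : 3 ≤ n) (u : ℝ)
    (hu1 : 1 / ((n : ℝ) - 1) < u)
    (u' : ℝ) (hu' : u' = (((n : ℝ) - 1) * u - 1) / ((n : ℝ) - 2))
    (f : SchwartzMap (EuclideanSpace ℝ (Fin (n - 2)) × ℝ) ℂ)
    (h : EuclideanSpace ℝ (Fin (n - 2)) → ℂ)
    (hh : ∀ y : EuclideanSpace ℝ (Fin (n - 2)), y ≠ 0 →
      h y = ∫ s : ℝ, (((1 + s ^ 2) ^ (-(((n : ℝ) - 1) * u / 2)) : ℝ) : ℂ) * f (y, ‖y‖ * s)) :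
    ∫⁻ y : EuclideanSpace ℝ (Fin (n - 2)),
        ENNReal.ofReal (‖y‖ ^ (-(((n : ℝ) - 2) * u'))) * (‖h y‖₊ : ℝ≥0∞) ^ 2
      ≤ ENNReal.ofReal (∫ t : ℝ, (1 + t ^ 2) ^ (-(((n : ℝ) - 1) * u / 2))) *
          ∫⁻ p : EuclideanSpace ℝ (Fin (n - 2)) × ℝ,
            ENNReal.ofReal ((‖p.1‖ ^ 2 + p.2 ^ 2) ^ (-(((n : ℝ) - 1) * u / 2))) *
              (‖f p‖₊ : ℝ≥0∞) ^ 2 := by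
  have hn' : (3 : ℝ) ≤ n := by exact_mod_cast hn
  set α := ((n : ℝ) - 1) * u / 2 with hα_def
  have hα : 1 < 2 * α := by
    rw [div_lt_iff₀' (by linarith)] at hu1
    linarith
  have hexp : -(((n : ℝ) - 2) * u') = 1 - 2 * α := by
    rw [hu', mul_div_cancel₀ _ (by linarith), hα_def]
    ring
  -- `{0}` is a null set only because the `y`-space has positive dimension
  have : Nonempty (Fin (n - 2)) := ⟨⟨0, by omega⟩⟩
  rw [Measure.volume_eq_prod, lintegral_prod _ (by fun_prop),
    ← lintegral_const_mul' _ _ ENNReal.ofReal_ne_top,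
    ofReal_integral_eq_lintegral_ofReal (integrable_one_add_sq_rpow_neg_s9 hα)
      (.of_forall fun t => by positivity)]
  refine lintegral_mono_ae ((Measure.ae_ne volume 0).mono fun y hy => ?_)
  rw [hh y hy, hexp]
  simp only [← enorm_eq_nnnorm]
  exact rpow_mul_enorm_integral_sq_le (φ := fun t => f (y, t)) (norm_pos_iff.2 hy)
    (f.continuous.comp (Continuous.prodMk_right y)).measurable

/-- Corollary 3.10 of the paper in the weighted-`L²` model: the restriction map
(the adjoint `J*` of the isometric extension `J`) is bounded, with norm controlled by
`C_u = ∫ (1+t²)^{-(n-1)u/2} dt`. -/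
theorem restriction_continuous (n : ℕ) (hn : 3 ≤ n) (u : ℝ)
    (hu1 : 1 / ((n : ℝ) - 1) < u) (hu2 : u < 1)
    (u' : ℝ) (hu' : u' = (((n : ℝ) - 1) * u - 1) / ((n : ℝ) - 2))
    (f : SchwartzMap (EuclideanSpace ℝ (Fin (n - 2)) × ℝ) ℂ)
    (h : EuclideanSpace ℝ (Fin (n - 2)) → ℂ)
    (hh : ∀ y : EuclideanSpace ℝ (Fin (n - 2)), y ≠ 0 →
      h y = ∫ s : ℝ, (((1 + s ^ 2) ^ (-(((n : ℝ) - 1) * u / 2)) : ℝ) : ℂ) * f (y, ‖y‖ * s)) :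
    ∫⁻ y : EuclideanSpace ℝ (Fin (n - 2)),
        ENNReal.ofReal (‖y‖ ^ (-(((n : ℝ) - 2) * u'))) * (‖h y‖₊ : ℝ≥0∞) ^ 2
      ≤ ENNReal.ofReal (∫ t : ℝ, (1 + t ^ 2) ^ (-(((n : ℝ) - 1) * u / 2))) *
          ∫⁻ p : EuclideanSpace ℝ (Fin (n - 2)) × ℝ,
            ENNReal.ofReal ((‖p.1‖ ^ 2 + p.2 ^ 2) ^ (-(((n : ℝ) - 1) * u / 2))) *
              (‖f p‖₊ : ℝ≥0∞) ^ 2 :=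
  restriction_continuous_general n hn u hu1 u' hu' f h hh
end

section
/- Let d ≥ 1 and i ≥ 0 be integers, let λ > 1 be real, let P : ℝ^d × ℝ → ℝ be a homogeneous polynomial function of degree 2i in the d+1 coordinates, and let x ∈ ℝ^d with x ≠ 0. Set F(t) = P(x,t) · (|x|² + t²)^{-λ/2 - i} for t ∈ ℝ. Then F is Lebesgue integrable on ℝ, its Fourier transform 𝓕F(s) = ∫_ℝ F(t) e^{-2πist} dt is Lebesgue integrable on ℝ, and ∫_ℝ 𝓕F(s) ds = P(x,0) · |x|^{-λ - 2i}. -/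
open MeasureTheory Real

open scoped FourierTransform

/-!
Write `F(t) = p(t) (|x|² + t²)^γ` with `deg p ≤ 2i` and `γ = -λ/2 - i`, so that `deg p + 2γ < -1`.
Functions `q(t) (c + t²)^γ` with `deg q + 2γ < -1` are integrable, and differentiating one gives
another (`deg q` grows by at most one while `γ` drops by one). Hence `F`, `F'`, `F''` are
integrable, so `(1 + s²) ‖𝓕F(s)‖ ≤ ‖F‖₁ + ‖F''‖₁ / 4π²` and `𝓕F` is integrable; Fourier inversion
at the continuity point `0` then gives `∫ 𝓕F = F(0)`.
-/

namespace MvPolynomial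

open scoped Polynomial

open Polynomial (natDegree_X_le natDegree_C_mul_le natDegree_prod_le natDegree_pow_le_of_le
  natDegree_sum_le_of_forall_le)

theorem natDegree_aeval_le_totalDegree {σ R : Type*} [CommSemiring R]
    (Q : MvPolynomial σ R) {g : σ → R[X]} (hg : ∀ k, (g k).natDegree ≤ 1) :
    (aeval g Q).natDegree ≤ Q.totalDegree := by
  rw [aeval_def, eval₂_eq]
  refine natDegree_sum_le_of_forall_le _ _ fun m hm => ?_
  calc (algebraMap R R[X] (coeff m Q) * ∏ k ∈ m.support, g k ^ m k).natDegree
      ≤ ∑ k ∈ m.support, (g k ^ m k).natDegree :=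
        (natDegree_C_mul_le _ _).trans (natDegree_prod_le _ _)
    _ ≤ ∑ k ∈ m.support, m k :=
        Finset.sum_le_sum fun k _ => natDegree_pow_le_of_le _ (hg k) |>.trans_eq (mul_one _)
    _ ≤ Q.totalDegree := le_totalDegree hm

theorem exists_natDegree_le_eval_snoc {R : Type*} [CommSemiring R] {n : ℕ}
    (Q : MvPolynomial (Fin (n + 1)) R) (y : Fin n → R) :
    ∃ p : R[X], p.natDegree ≤ Q.totalDegree ∧ ∀ t, p.eval t = eval (Fin.snoc y t) Q := by
  refine ⟨aeval (Fin.snoc (Polynomial.C ∘ y) Polynomial.X : Fin (n + 1) → R[X]) Q,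
    Q.natDegree_aeval_le_totalDegree fun k => ?_, fun t => ?_⟩
  · refine Fin.lastCases ?_ (fun j => ?_) k <;> simp [natDegree_X_le]
  · have hsnoc : (fun k => Polynomial.aeval t
        ((Fin.snoc (Polynomial.C ∘ y) Polynomial.X : Fin (n + 1) → R[X]) k)) = Fin.snoc y t := by
      rw [← Function.comp_def, Fin.comp_snoc]
      simp [Function.comp_def]
    rw [← Polynomial.coe_aeval_eq_eval, comp_aeval_apply, hsnoc]
    rfl

end MvPolynomial

section PolyMulRpow

open Polynomial

variable {c : ℝ}

theorem continuous_add_sq_rpow (hc : 0 < c) (e : ℝ) : Continuous fun t : ℝ => (c + t ^ 2) ^ e :=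
  (continuous_const.add (continuous_pow 2)).rpow_const fun t =>
    Or.inl (add_pos_of_pos_of_nonneg hc (sq_nonneg t)).ne'

theorem integrable_add_sq_rpow (hc : 0 < c) {e : ℝ} (he : e < -1 / 2) :
    Integrable fun t : ℝ => (c + t ^ 2) ^ e := by
  have hone := integrable_rpow_neg_one_add_norm_sq (E := ℝ) (μ := volume) (r := -2 * e)
    (by simp; linarith)
  simp only [norm_eq_abs, sq_abs, show -(-2 * e) / 2 = e by ring] at hone
  set m := min c 1
  have hm : 0 < m := lt_min hc one_pos
  refine (hone.const_mul (m ^ e)).mono' (continuous_add_sq_rpow hc e).aestronglyMeasurable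
    (ae_of_all _ fun t => ?_)
  have hmt : m * (1 + t ^ 2) ≤ c + t ^ 2 := by
    nlinarith [min_le_left c 1, min_le_right c 1, sq_nonneg t]
  rw [norm_of_nonneg (by positivity), ← mul_rpow hm.le (by positivity)]
  exact rpow_le_rpow_of_nonpos (by positivity) hmt (by linarith)

theorem integrable_pow_mul_add_sq_rpow (hc : 0 < c) {j : ℕ} {γ : ℝ} (h : j + 2 * γ < -1) :
    Integrable fun t : ℝ => t ^ j * (c + t ^ 2) ^ γ := by
  refine (integrable_add_sq_rpow hc (e := j / 2 + γ) (by linarith)).mono'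
    ((continuous_pow j).mul (continuous_add_sq_rpow hc γ)).aestronglyMeasurable
    (ae_of_all _ fun t => ?_)
  have hpos : 0 < c + t ^ 2 := by positivity
  have habs : |t| ^ j = (t ^ 2) ^ ((j : ℝ) / 2) := by
    rw [← sq_abs, ← rpow_natCast |t| 2, ← rpow_mul (abs_nonneg t),
      Nat.cast_ofNat, show (2 : ℝ) * (j / 2) = j by ring, rpow_natCast]
  rw [norm_mul, norm_pow, norm_eq_abs, norm_of_nonneg (by positivity), rpow_add hpos, habs]
  gcongr
  linarith

def IsDecayingPolyMulRpow (c : ℝ) (f : ℝ → ℝ) : Prop :=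
  ∃ (q : ℝ[X]) (γ : ℝ), q.natDegree + 2 * γ < -1 ∧ f = fun t => q.eval t * (c + t ^ 2) ^ γ

namespace IsDecayingPolyMulRpow

variable {f : ℝ → ℝ}

theorem integrable (hc : 0 < c) (hf : IsDecayingPolyMulRpow c f) : Integrable f := by
  obtain ⟨q, γ, hdeg, rfl⟩ := hf
  simp_rw [eval_eq_sum_range, Finset.sum_mul, mul_assoc]
  refine integrable_finsetSum _ fun j hj => (integrable_pow_mul_add_sq_rpow hc ?_).const_mul _
  have : (j : ℝ) ≤ q.natDegree := by
    exact_mod_cast Nat.lt_succ_iff.mp (Finset.mem_range.mp hj)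
  linarith

theorem exists_hasDerivAt (hc : 0 < c) (hf : IsDecayingPolyMulRpow c f) :
    ∃ f', IsDecayingPolyMulRpow c f' ∧ ∀ t, HasDerivAt f (f' t) t := by
  obtain ⟨q, γ, hdeg, rfl⟩ := hf
  set q' := derivative q * (X ^ 2 + C c) + C (2 * γ) * X * q
  have hq' : q'.natDegree ≤ q.natDegree + 1 := by
    refine natDegree_add_le_of_degree_le ?_ ?_
    · rcases Nat.eq_zero_or_pos q.natDegree with h | h
      · simp [derivative_of_natDegree_zero h]
      · have hsq : (X ^ 2 + C c).natDegree ≤ 2 :=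
          natDegree_add_le_of_degree_le (natDegree_X_pow_le 2) (by simp)
        exact (natDegree_mul_le_of_le (natDegree_derivative_le q) hsq).trans (by omega)
    · refine natDegree_mul_le_of_le (natDegree_mul_le_of_le (natDegree_C _).le natDegree_X_le)
        le_rfl |>.trans (by omega)
  refine ⟨fun t => q'.eval t * (c + t ^ 2) ^ (γ - 1), ⟨q', γ - 1, ?_, rfl⟩, fun t => ?_⟩
  · have : (q'.natDegree : ℝ) ≤ q.natDegree + 1 := by exact_mod_cast hq'
    linarith
  have hpos : 0 < c + t ^ 2 := by positivity
  have hsq : HasDerivAt (fun t : ℝ => c + t ^ 2) (2 * t) t := by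
    simpa using (hasDerivAt_pow 2 t).const_add c
  refine ((q.hasDerivAt t).mul (hsq.rpow_const (p := γ) (Or.inl hpos.ne'))).congr_deriv ?_
  have hsplit : (c + t ^ 2) ^ γ = (c + t ^ 2) * (c + t ^ 2) ^ (γ - 1) := by
    conv_lhs => rw [show γ = 1 + (γ - 1) by ring, rpow_add hpos, rpow_one]
  simp only [q', eval_add, eval_mul, eval_pow, eval_X, eval_C, hsplit]
  ring

end IsDecayingPolyMulRpow

end PolyMulRpow

namespace Real

variable {E : Type*} [NormedAddCommGroup E] [NormedSpace ℂ E]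

theorem norm_fourier_le_integral_norm (f : ℝ → E) (s : ℝ) : ‖𝓕 f s‖ ≤ ∫ t, ‖f t‖ :=
  VectorFourier.norm_fourierIntegral_le_integral_norm _ _ _ _ _

theorem integrable_fourier_of_hasDerivAt {f f' f'' : ℝ → E}
    (hf : ∀ t, HasDerivAt f (f' t) t) (hf' : ∀ t, HasDerivAt f' (f'' t) t)
    (hfi : Integrable f) (hfi' : Integrable f') (hfi'' : Integrable f'') :
    Integrable (𝓕 f) := by
  have hd : deriv f = f' := funext fun t => (hf t).deriv
  have hd' : deriv f' = f'' := funext fun t => (hf' t).deriv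
  have h1 := fourier_deriv hfi (fun t => (hf t).differentiableAt) (hd ▸ hfi')
  have h2 := fourier_deriv hfi' (fun t => (hf' t).differentiableAt) (hd' ▸ hfi'')
  rw [hd] at h1
  rw [hd', h1] at h2
  set A := ∫ t, ‖f t‖
  set B := ∫ t, ‖f'' t‖
  have hbound (s : ℝ) : ‖𝓕 f s‖ ≤ (A + B / (4 * π ^ 2)) * (1 + s ^ 2)⁻¹ := by
    have hA : ‖𝓕 f s‖ ≤ A := norm_fourier_le_integral_norm f s
    have hB : ‖𝓕 f s‖ * ‖s‖ ^ 2 ≤ B / (4 * π ^ 2) := by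
      rw [le_div_iff₀ (by positivity)]
      refine Eq.trans_le ?_ (norm_fourier_le_integral_norm f'' s)
      rw [h2, norm_smul, norm_smul]
      simp only [norm_mul, Complex.norm_ofNat, Complex.norm_real, Complex.norm_I,
        norm_of_nonneg pi_pos.le]
      ring
    rw [norm_eq_abs, sq_abs] at hB
    rw [← div_eq_mul_inv, le_div_iff₀ (by positivity)]
    linarith
  refine (integrable_inv_one_add_sq.const_mul (A + B / (4 * π ^ 2))).mono'
    (VectorFourier.fourierIntegral_continuous continuous_fourierChar
      continuous_inner hfi).aestronglyMeasurable (ae_of_all _ hbound)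

end Real

section FourierInversion

variable {V E : Type*} [NormedAddCommGroup V] [InnerProductSpace ℝ V] [FiniteDimensional ℝ V]
  [MeasurableSpace V] [BorelSpace V] [NormedAddCommGroup E] [NormedSpace ℂ E] [CompleteSpace E]

theorem MeasureTheory.Integrable.integral_fourier_eq {f : V → E} (hf : Integrable f)
    (h'f : Integrable (𝓕 f)) (hv : ContinuousAt f 0) : ∫ w, 𝓕 f w = f 0 := by
  rw [← hf.fourierInv_fourier_eq h'f hv, fourierInv_eq]
  simp

end FourierInversion

theorem Real.fourier_ofReal_eq_integral (F : ℝ → ℝ) (s : ℝ) :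
    𝓕 (fun t => (F t : ℂ)) s =
      ∫ t, (F t : ℂ) * Complex.exp ((-(2 * π * s * t) : ℝ) * Complex.I) := by
  simp_rw [fourier_real_eq_integral_exp_smul, smul_eq_mul, mul_comm _ (F _ : ℂ)]
  congr! 5
  push_cast
  ring

theorem fourier_inversion_scalar_kernel_general (d i : ℕ)
    (lam : ℝ) (hlam : 1 < lam)
    (P : EuclideanSpace ℝ (Fin d) × ℝ → ℝ)
    (hP : ∃ Q : MvPolynomial (Fin (d + 1)) ℝ, Q.IsHomogeneous (2 * i) ∧
      ∀ (x : EuclideanSpace ℝ (Fin d)) (t : ℝ),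
        P (x, t) = MvPolynomial.eval (Fin.snoc (fun k => x k) t : Fin (d + 1) → ℝ) Q)
    (x : EuclideanSpace ℝ (Fin d)) (hx : x ≠ 0) :
    Integrable (fun t : ℝ => P (x, t) * (‖x‖ ^ 2 + t ^ 2) ^ (-(lam / 2) - (i : ℝ))) ∧
    Integrable (fun s : ℝ => ∫ t : ℝ,
        ((P (x, t) * (‖x‖ ^ 2 + t ^ 2) ^ (-(lam / 2) - (i : ℝ)) : ℝ) : ℂ) *
          Complex.exp ((-(2 * π * s * t) : ℝ) * Complex.I)) ∧
    ∫ s : ℝ, (∫ t : ℝ,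
        ((P (x, t) * (‖x‖ ^ 2 + t ^ 2) ^ (-(lam / 2) - (i : ℝ)) : ℝ) : ℂ) *
          Complex.exp ((-(2 * π * s * t) : ℝ) * Complex.I))
      = ((P (x, 0) * ‖x‖ ^ (-lam - 2 * (i : ℝ)) : ℝ) : ℂ) := by
  obtain ⟨Q, hQ, hPQ⟩ := hP
  obtain ⟨p, hp_deg, hp_eval⟩ := Q.exists_natDegree_le_eval_snoc fun k => x k
  set F : ℝ → ℝ := fun t => P (x, t) * (‖x‖ ^ 2 + t ^ 2) ^ (-(lam / 2) - (i : ℝ))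
  have hc : 0 < ‖x‖ ^ 2 := by positivity
  have hF : IsDecayingPolyMulRpow (‖x‖ ^ 2) F := by
    refine ⟨p, -(lam / 2) - i, ?_, funext fun t => by simp only [F, hp_eval, hPQ]⟩
    have : (p.natDegree : ℝ) ≤ 2 * i := by exact_mod_cast hp_deg.trans hQ.totalDegree_le
    linarith
  obtain ⟨F', hF', hFF'⟩ := hF.exists_hasDerivAt hc
  obtain ⟨F'', hF'', hF'F''⟩ := hF'.exists_hasDerivAt hc
  have hFi : Integrable fun t => (F t : ℂ) := (hF.integrable hc).ofReal
  have hfourier : Integrable (𝓕 fun t => (F t : ℂ)) :=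
    Real.integrable_fourier_of_hasDerivAt (fun t => (hFF' t).ofReal_comp)
      (fun t => (hF'F'' t).ofReal_comp) hFi (hF'.integrable hc).ofReal (hF''.integrable hc).ofReal
  simp_rw [← Real.fourier_ofReal_eq_integral]
  refine ⟨hF.integrable hc, hfourier, ?_⟩
  rw [hFi.integral_fourier_eq hfourier (hFF' 0).continuousAt.ofReal]
  congr 2
  simp only [F]
  rw [zero_pow two_ne_zero, add_zero, ← rpow_natCast, ← rpow_mul (norm_nonneg x)]
  push_cast
  ring_nf

/-- The scalar (matrix-entry) form of the central computation in the proof of Lemma 4.5 of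
the paper: for a homogeneous polynomial `P` of degree `2i` in `d+1` variables and `λ > 1`,
Fourier inversion at `t = 0` holds for `F(t) = P(x,t)·(|x|²+t²)^{-λ/2-i}`. -/
theorem fourier_inversion_scalar_kernel (d i : ℕ) (hd : 1 ≤ d)
    (lam : ℝ) (hlam : 1 < lam)
    (P : EuclideanSpace ℝ (Fin d) × ℝ → ℝ)
    (hP : ∃ Q : MvPolynomial (Fin (d + 1)) ℝ, Q.IsHomogeneous (2 * i) ∧
      ∀ (x : EuclideanSpace ℝ (Fin d)) (t : ℝ),
        P (x, t) = MvPolynomial.eval (Fin.snoc (fun k => x k) t : Fin (d + 1) → ℝ) Q)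
    (x : EuclideanSpace ℝ (Fin d)) (hx : x ≠ 0) :
    Integrable (fun t : ℝ => P (x, t) * (‖x‖ ^ 2 + t ^ 2) ^ (-(lam / 2) - (i : ℝ))) ∧
    Integrable (fun s : ℝ => ∫ t : ℝ,
        ((P (x, t) * (‖x‖ ^ 2 + t ^ 2) ^ (-(lam / 2) - (i : ℝ)) : ℝ) : ℂ) *
          Complex.exp ((-(2 * π * s * t) : ℝ) * Complex.I)) ∧
    ∫ s : ℝ, (∫ t : ℝ,
        ((P (x, t) * (‖x‖ ^ 2 + t ^ 2) ^ (-(lam / 2) - (i : ℝ)) : ℝ) : ℂ) *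
          Complex.exp ((-(2 * π * s * t) : ℝ) * Complex.I))
      = ((P (x, 0) * ‖x‖ ^ (-lam - 2 * (i : ℝ)) : ℝ) : ℂ) :=
  fourier_inversion_scalar_kernel_general d i lam hlam P hP x hx
end
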